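/- In the 3-colouring reduction, the constructed team satisfies the threefold split-disjunction if and only if the graph is 3-colourable: for a finite loop-free graph G = (V,E) with V = {v₁,…,vₙ}, E = {e₁,…,e_m}, define the team T = {s₁,…,sₙ} over variables {x₁,…,xₙ} ∪ {y_{ℓ,j} : ℓ ≤ m, j ≤ n} by: s_i(x_j) = 1 iff {v_i,v_j} ∈ E; s_i(x_i) = 0; s_i(y_{ℓ,j}) = 1 for all j if v_i ∈ e_ℓ; and if v_i ∉ e_ℓ then s_i(y_{ℓ,i}) = 0 and s_i(y_{ℓ,j}) = 1 for j ≠ i. Let φ = ⋀_{e_k = {v_i,v_j}} dep(y_k; x_i) where y_k denotes the tuple (y_{k,1},…,y_{k,n}). Then T ⊨ φ∨φ∨φ if and only if G is 3-colourable. -/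

import Mathlib

inductive PDL : Type where
  | top : PDL
  | bot : PDL
  | pos : ℕ → PDL
  | neg : ℕ → PDL
  | conj : PDL → PDL → PDL
  | disj : PDL → PDL → PDL
  | dep : Finset ℕ → Finset ℕ → PDL
  | ndep : Finset ℕ → Finset ℕ → PDL

abbrev Team := Set (ℕ → Bool)

def sat : Team → PDL → Prop
  | _, .top => True
  | T, .bot => T = ∅
  | T, .pos x => ∀ t ∈ T, t x = true
  | T, .neg x => ∀ t ∈ T, t x = false
  | T, .conj φ ψ => sat T φ ∧ sat T ψ
  | T, .disj φ ψ => ∃ T₁ T₂, T₁ ∪ T₂ = T ∧ sat T₁ φ ∧ sat T₂ ψ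
  | T, .dep P Q => ∀ t ∈ T, ∀ t' ∈ T, (∀ p ∈ P, t p = t' p) → (∀ q ∈ Q, t q = t' q)
  | T, .ndep _ _ => T = ∅

/-- Conjunction of a list of PDL formulas. -/
def bigConj : List PDL → PDL := List.foldr .conj .top

/-- Index of the variable x_j (j < n). -/
def xVar (j : ℕ) : ℕ := j

/-- Index of the variable y_{ℓ,j} (ℓ < m, j < n), for n variables. -/
def yVar (n ℓ j : ℕ) : ℕ := n + ℓ * n + j

/-- The tuple y_ℓ of variables y_{ℓ,1},…,y_{ℓ,n} as a finite set. -/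
def yTuple (n ℓ : ℕ) : Finset ℕ := (Finset.range n).image (fun j => yVar n ℓ j)

/-- Membership of a vertex in an edge. -/
def inEdge {n m : ℕ} (E : Fin m → Fin n × Fin n) (i : Fin n) (ℓ : Fin m) : Prop :=
  (E ℓ).1 = i ∨ (E ℓ).2 = i

open Classical in
/-- The assignment s_i corresponding to vertex v_i in the 3-colouring reduction. -/
noncomputable def colAssign {n m : ℕ} (E : Fin m → Fin n × Fin n) (i : Fin n) : ℕ → Bool :=
  fun v =>
    if hv : v < n then
      -- s_i(x_j) = 1 iff {v_i, v_j} is an edge (in particular s_i(x_i) = 0 for loop-free graphs)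
      decide (∃ ℓ : Fin m, (E ℓ = (i, ⟨v, hv⟩)) ∨ (E ℓ = (⟨v, hv⟩, i)))
    else
      -- the variable y_{ℓ,j} with ℓ = (v-n)/n and j = (v-n)%n :
      -- value 0 exactly when v_i ∉ e_ℓ and j = i, otherwise 1
      if hℓ : (v - n) / n < m then
        decide (¬ ((v - n) % n = i.val ∧ ¬ inEdge E i ⟨(v - n) / n, hℓ⟩))
      else true

/-- The team {s_1, …, s_n} of the reduction. -/
noncomputable def colTeam {n m : ℕ} (E : Fin m → Fin n × Fin n) : Team :=
  Set.range (colAssign E)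

/-- φ = ⋀_{e_k = {v_i, v_j}} dep(y_k ; x_i), where i is the first endpoint of e_k. -/
def colFormula (n m : ℕ) (E : Fin m → Fin n × Fin n) : PDL :=
  bigConj ((List.finRange m).map (fun k => PDL.dep (yTuple n k.val) {xVar (E k).1.val}))

/-!
Satisfaction in propositional dependence logic is downward closed, so a split of the team
`{s_i}` into three parts satisfying `φ` amounts to a 3-colouring whose colour classes satisfy `φ`.
Two distinct assignments `s_a`, `s_b` agree on the tuple `y_k` exactly when `v_a` and `v_b` both
lie on `e_k`. Hence, inside a colour class, `dep(y_k; x_i)` only compares the endpoints `v_i`, `v_j`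
of `e_k`, and it fails there since `s_i(x_i) = 0` but `s_j(x_i) = 1`.
-/

theorem sat_mono {S T : Team} (hST : S ⊆ T) {φ : PDL} (hT : sat T φ) : sat S φ := by
  induction φ generalizing S T with
  | top => trivial
  | bot | ndep => exact Set.subset_eq_empty hST hT
  | pos | neg => exact fun t ht => hT t (hST ht)
  | conj φ ψ ihφ ihψ => exact ⟨ihφ hST hT.1, ihψ hST hT.2⟩
  | disj φ ψ ihφ ihψ =>
    obtain ⟨T₁, T₂, rfl, h₁, h₂⟩ := hT
    exact ⟨S ∩ T₁, S ∩ T₂, by rw [← Set.inter_union_distrib_left, Set.inter_eq_left.mpr hST],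
      ihφ Set.inter_subset_right h₁, ihψ Set.inter_subset_right h₂⟩
  | dep P Q => exact fun t ht t' ht' => hT t (hST ht) t' (hST ht')

theorem sat_disj_disj_range_iff {ι : Type*} (f : ι → ℕ → Bool) (φ : PDL) :
    sat (Set.range f) (.disj φ (.disj φ φ)) ↔ ∃ c : ι → Fin 3, ∀ r, sat (f '' (c ⁻¹' {r})) φ := by
  classical
  constructor
  · rintro ⟨T₁, T₂₃, hT, h₁, T₂, T₃, rfl, h₂, h₃⟩
    have hcover (i : ι) : f i ∈ T₁ ∪ (T₂ ∪ T₃) := hT ▸ Set.mem_range_self i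
    let c (i : ι) : Fin 3 := if f i ∈ T₁ then 0 else if f i ∈ T₂ then 1 else 2
    have hc (i : ι) : f i ∈ ![T₁, T₂, T₃] (c i) := by
      simp only [c]
      split_ifs with h₁ h₂
      exacts [h₁, h₂, ((hcover i).resolve_left h₁).resolve_left h₂]
    refine ⟨c, fun r => sat_mono (Set.image_subset_iff.mpr fun i hi => hi ▸ hc i) ?_⟩
    fin_cases r <;> assumption
  · rintro ⟨c, hc⟩
    refine ⟨_, _, ?_, hc 0, _, _, rfl, hc 1, hc 2⟩
    simp only [← Set.image_union, ← Set.preimage_union]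
    convert Set.image_univ (f := f)
    ext i
    simp only [Set.mem_union, Set.mem_preimage, Set.mem_singleton_iff, Set.mem_univ, iff_true]
    generalize c i = r
    fin_cases r <;> simp

theorem sat_bigConj {T : Team} {L : List PDL} : sat T (bigConj L) ↔ ∀ φ ∈ L, sat T φ := by
  induction L with
  | nil => simp [bigConj, sat]
  | cons φ L ih => simp [bigConj, sat, ← ih]

section Reduction

variable {n m : ℕ} (E : Fin m → Fin n × Fin n)

theorem sat_colFormula_iff {T : Team} :
    sat T (colFormula n m E) ↔ ∀ k : Fin m, sat T (.dep (yTuple n k) {xVar (E k).1}) := by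
  simp [colFormula, sat_bigConj]

theorem colAssign_xVar_eq_true_iff (i j : Fin n) :
    colAssign E i (xVar j) = true ↔ ∃ ℓ, E ℓ = (i, j) ∨ E ℓ = (j, i) := by
  rw [colAssign, dif_pos (show xVar j < n from j.isLt)]
  exact decide_eq_true_iff

theorem colAssign_yVar_eq_false_iff (i : Fin n) (k : Fin m) (j : Fin n) :
    colAssign E i (yVar n k j) = false ↔ j = i ∧ ¬inEdge E i k := by
  have hsub : yVar n k j - n = j + n * k := by rw [yVar, Nat.add_assoc, Nat.add_sub_cancel_left]; ring
  have hdiv : (yVar n k j - n) / n = k := by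
    rw [hsub, Nat.add_mul_div_left _ _ i.pos, Nat.div_eq_of_lt j.isLt, Nat.zero_add]
  have hmod : (yVar n k j - n) % n = j := by
    rw [hsub, Nat.add_mul_mod_self_left, Nat.mod_eq_of_lt j.isLt]
  have hlt : ¬yVar n k j < n := by rw [yVar]; omega
  simp [colAssign, hlt, hdiv, hmod, Fin.ext_iff]

theorem colAssign_eqOn_yTuple_iff (a b : Fin n) (k : Fin m) :
    (∀ q ∈ yTuple n k, colAssign E a q = colAssign E b q) ↔
      a = b ∨ inEdge E a k ∧ inEdge E b k := by
  have hagree (j : Fin n) : colAssign E a (yVar n k j) = colAssign E b (yVar n k j) ↔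
      (j = a ∧ ¬inEdge E a k ↔ j = b ∧ ¬inEdge E b k) := by
    rw [← colAssign_yVar_eq_false_iff, ← colAssign_yVar_eq_false_iff]
    cases colAssign E a (yVar n k j) <;> cases colAssign E b (yVar n k j) <;> simp
  have hyTuple : (∀ q ∈ yTuple n k, colAssign E a q = colAssign E b q) ↔
      ∀ j : Fin n, colAssign E a (yVar n k j) = colAssign E b (yVar n k j) := by
    simp [yTuple, Fin.forall_iff]
  simp only [hyTuple, hagree]
  constructor
  · intro h
    by_cases ha : inEdge E a k
    · by_cases hb : inEdge E b k
      · exact .inr ⟨ha, hb⟩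
      · exact absurd ((h b).mpr ⟨rfl, hb⟩).2 (not_not.mpr ha)
    · exact .inl ((h a).mp ⟨rfl, ha⟩).1
  · rintro (rfl | ⟨ha, hb⟩) j
    · rfl
    · simp [ha, hb]

variable {E}

theorem colAssign_xVar_self (hloopfree : ∀ ℓ, (E ℓ).1 ≠ (E ℓ).2) (i : Fin n) :
    colAssign E i (xVar i) = false := by
  rw [← Bool.not_eq_true, colAssign_xVar_eq_true_iff]
  rintro ⟨ℓ, hℓ | hℓ⟩ <;> exact hloopfree ℓ (by rw [hℓ])

theorem sat_dep_image_colAssign_iff (hloopfree : ∀ ℓ, (E ℓ).1 ≠ (E ℓ).2) (A : Set (Fin n))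
    (k : Fin m) :
    sat (colAssign E '' A) (.dep (yTuple n k) {xVar (E k).1}) ↔ ¬((E k).1 ∈ A ∧ (E k).2 ∈ A) := by
  constructor
  · rintro hdep ⟨h₁, h₂⟩
    have hy := (colAssign_eqOn_yTuple_iff E _ _ k).mpr (.inr ⟨.inl rfl, .inr rfl⟩)
    have hx := hdep _ ⟨_, h₁, rfl⟩ _ ⟨_, h₂, rfl⟩ hy _ (Finset.mem_singleton_self _)
    rw [colAssign_xVar_self hloopfree, eq_comm, ← Bool.not_eq_true,
      colAssign_xVar_eq_true_iff] at hx
    exact hx ⟨k, .inr rfl⟩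
  · rintro hA _ ⟨a, ha, rfl⟩ _ ⟨b, hb, rfl⟩ hy q -
    obtain rfl | ⟨rfl | rfl, rfl | rfl⟩ := (colAssign_eqOn_yTuple_iff E a b k).mp hy
    · rfl
    · rfl
    · exact (hA ⟨ha, hb⟩).elim
    · exact (hA ⟨hb, ha⟩).elim
    · rfl

theorem sat_colFormula_image_iff (hloopfree : ∀ ℓ, (E ℓ).1 ≠ (E ℓ).2) (A : Set (Fin n)) :
    sat (colAssign E '' A) (colFormula n m E) ↔ ∀ k, ¬((E k).1 ∈ A ∧ (E k).2 ∈ A) := by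
  simp only [sat_colFormula_iff, sat_dep_image_colAssign_iff hloopfree]

end Reduction

/-- Correctness of the 3-colouring reduction: the constructed team satisfies the
threefold split-disjunction φ ∨ φ ∨ φ iff the loop-free graph is 3-colourable. -/
theorem three_colouring_reduction (n m : ℕ) (E : Fin m → Fin n × Fin n)
    (hloopfree : ∀ ℓ : Fin m, (E ℓ).1 ≠ (E ℓ).2) :
    sat (colTeam E) (.disj (colFormula n m E) (.disj (colFormula n m E) (colFormula n m E)))
      ↔ ∃ c : Fin n → Fin 3, ∀ ℓ : Fin m, c (E ℓ).1 ≠ c (E ℓ).2 := by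
  rw [colTeam, sat_disj_disj_range_iff]
  simp only [sat_colFormula_image_iff hloopfree, Set.mem_preimage, Set.mem_singleton_iff]
  refine exists_congr fun c => ⟨fun h ℓ hc => h _ ℓ ⟨rfl, hc.symm⟩, ?_⟩
  rintro h r ℓ ⟨h₁, h₂⟩
  exact h ℓ (h₁.trans h₂.symm)
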